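/- Let D : X × X → [0, ∞) be ½-Lipschitz with respect to the max-metric on X × X, where (X, d) is a metric space. Fix a ball B = B(z, r), points x, x₀ ∈ B, and let B₁ = {y ∉ 2B : D(x₀, y) ≤ d(x₀, y) and d(x, y) < D(x, y)}. Then B₁ is contained in an annulus: B₁ ⊆ {y : r₁ ≤ d(x₀, y) ≤ 100·r₁}, where r₁ = inf{d(x₀, y) : y ∈ B₁} (interpreting the inclusion as vacuous if B₁ = ∅). -/

import Mathlib

/-!
For `y, y' ∈ B₁`, chaining the triangle inequality with the Lipschitz bound along
`D(x,y) → D(x,y') → D(x₀,y')` gives `½ d(x₀,y) ≤ (3/2) d(x,x₀) + (3/2) d(x₀,y')`.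
Since `d(x,x₀) ≤ 2r < 2 d(x₀,y')` for `y'` outside `2B`, this yields
`d(x₀,y) ≤ 9 d(x₀,y')`, and taking the infimum over `y'` gives the annulus bound.
-/

lemma le_mul_csInf_image {α : Type*} {S : Set α} {f : α → ℝ} {C : ℝ} (hC : 0 < C)
    {a : α} (ha : a ∈ S) (h : ∀ b ∈ S, f a ≤ C * f b) :
    f a ≤ C * sInf (f '' S) := by
  rw [← div_le_iff₀' hC]
  refine le_csInf ⟨f a, a, ha, rfl⟩ ?_
  rintro _ ⟨b, hb, rfl⟩
  exact (div_le_iff₀' hC).2 (h b hb)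

section HalfLipschitz

variable {X : Type*} [PseudoMetricSpace X] {D : X × X → ℝ}

lemma lipschitzWith_half_of_abs_sub_le
    (hD : ∀ a b a' b' : X, |D (a, b) - D (a', b')| ≤ (1 / 2) * max (dist a a') (dist b b')) :
    LipschitzWith (1 / 2) D :=
  LipschitzWith.of_dist_le_mul fun p q => by
    simpa [Real.dist_eq, Prod.dist_eq] using hD p.1 p.2 q.1 q.2

lemma dist_le_three_mul_add_three_mul (hD : LipschitzWith (1 / 2) D) {x x₀ y y' : X}
    (hy : dist x y < D (x, y)) (hy' : D (x₀, y') ≤ dist x₀ y') :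
    dist x₀ y ≤ 3 * dist x x₀ + 3 * dist x₀ y' := by
  have hlip : ∀ p q : X × X, D p - D q ≤ 1 / 2 * max (dist p.1 q.1) (dist p.2 q.2) :=
    fun p q => by
      simpa [Real.dist_eq, Prod.dist_eq] using (le_abs_self _).trans (hD.dist_le_mul p q)
  have hsecond : D (x, y) - D (x, y') ≤ 1 / 2 * dist y y' := by
    simpa using hlip (x, y) (x, y')
  have hfirst : D (x, y') - D (x₀, y') ≤ 1 / 2 * dist x x₀ := by
    simpa using hlip (x, y') (x₀, y')
  linarith [dist_triangle x₀ x y, dist_triangle_left y y' x₀, dist_comm x₀ x]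

end HalfLipschitz

theorem stmt13 {X : Type*} [MetricSpace X] (D : X × X → ℝ)
    (hDlip : ∀ a b a' b' : X,
      |D (a, b) - D (a', b')| ≤ (1 / 2) * max (dist a a') (dist b b'))
    (z : X) (r : ℝ) (x x₀ : X) (hx : dist x z ≤ r) (hx₀ : dist x₀ z ≤ r)
    (B₁ : Set X)
    (hB₁ : B₁ = {y : X | ¬ dist y z ≤ 2 * r ∧ D (x₀, y) ≤ dist x₀ y ∧
      dist x y < D (x, y)}) :
    ∀ y ∈ B₁,
      sInf ((fun y => dist x₀ y) '' B₁) ≤ dist x₀ y ∧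
      dist x₀ y ≤ 100 * sInf ((fun y => dist x₀ y) '' B₁) := by
  have hD := lipschitzWith_half_of_abs_sub_le hDlip
  have hxx₀ : dist x x₀ ≤ 2 * r := by linarith [dist_triangle_right x x₀ z]
  have hcompare : ∀ y ∈ B₁, ∀ y' ∈ B₁, dist x₀ y ≤ 100 * dist x₀ y' := by
    rintro y hy y' hy'
    rw [hB₁] at hy hy'
    obtain ⟨-, -, hDy⟩ := hy
    obtain ⟨hfar', hDy', -⟩ := hy'
    have hr : r < dist x₀ y' := by linarith [dist_triangle_left y' z x₀]
    linarith [dist_le_three_mul_add_three_mul hD hDy hDy', dist_nonneg (x := x₀) (y := y')]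
  intro y hy
  have hbdd : BddBelow ((fun y => dist x₀ y) '' B₁) :=
    ⟨0, by rintro _ ⟨_, _, rfl⟩; exact dist_nonneg⟩
  exact ⟨csInf_le hbdd ⟨y, hy, rfl⟩, le_mul_csInf_image (by norm_num) hy (hcompare y hy)⟩
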